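/- arXiv:2108.01581 — 3 statements merged into one kernel-verified Lean document; each statement's English description precedes it below -/
import Mathlib

section
/- Let X be a metric space, k > 0, and let E ⊆ X be a k-Ahlfors–David regular set with constant C_E. Suppose G ⊆ E satisfies diam G = D < ∞. Then for any A ≥ 1 there exists a set G̃ ⊆ E such that (i) G ⊆ G̃ ⊆ {x ∈ E : dist(x, G) < 3D/A}, and (ii) G̃ is k-Ahlfors–David regular with a constant depending only on k, C_E, and A. -/
/-!
Grow `G` inside `E` in dyadic steps: at step `n` add every point of `E` within
`ρₙ = D / (4A·2ⁿ)` of the current set, and let `G̃` be the closure of the union. As the radii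
halve, every point of `G̃` lies within `2ρₙ` of the `n`-th stage, hence within `D/(2A)` of `G`,
and so `diam G̃ ≤ 2D`. For `x ∈ G̃` and `r < diam G̃` pick `n` with `r/(8A) ≤ ρₙ ≤ r/4`: a point
`w` of the `n`-th stage near `x` has its whole ball `E ∩ B(w, ρₙ)` absorbed at the next stage
and contained in `B(x, r)`, so the lower regularity of `E` at `w` gives that of `G̃` at `x`.
The upper bound is inherited from `E`.
-/

open Metric MeasureTheory Set

variable {X : Type*} [MetricSpace X] [MeasurableSpace X] [BorelSpace X]

/-- `E` is a `k`-Ahlfors–David regular set with constant `C > 1`: `E` is closed, has more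
than one point, and `C⁻¹ r^k ≤ 𝓗^k(E ∩ B(x,r)) ≤ C r^k` for all `x ∈ E`, `0 < r < diam E`. -/
def ADR (k C : ℝ) (E : Set X) : Prop :=
  IsClosed E ∧ E.Nontrivial ∧ 1 < C ∧
    ∀ x ∈ E, ∀ r : ℝ, 0 < r → ENNReal.ofReal r < EMetric.diam E →
      ENNReal.ofReal (C⁻¹ * r ^ k) ≤ μH[k] (E ∩ ball x r) ∧
        μH[k] (E ∩ ball x r) ≤ ENNReal.ofReal (C * r ^ k)

/-- `F` has big pieces of the family `𝓕` with constant `θ`: for every `x ∈ F` and `R > 0`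
there is `G ∈ 𝓕` with `𝓗^k(B(x,R) ∩ F ∩ G) ≥ θ 𝓗^k(B(x,R) ∩ F)`. -/
def BigPieces (k θ : ℝ) (𝓕 : Set (Set X)) (F : Set X) : Prop :=
  ∀ x ∈ F, ∀ R : ℝ, 0 < R →
    ∃ G ∈ 𝓕, ENNReal.ofReal θ * μH[k] (ball x R ∩ F) ≤ μH[k] (ball x R ∩ F ∩ G)

section IterThickening

variable {α : Type*} [PseudoMetricSpace α]

def iterThickening (E G : Set α) (ρ : ℕ → ℝ) : ℕ → Set α
  | 0 => G
  | n + 1 => iterThickening E G ρ n ∪ E ∩ thickening (ρ n) (iterThickening E G ρ n)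

def iterThickeningClosure (E G : Set α) (ρ : ℕ → ℝ) : Set α :=
  closure (⋃ n, iterThickening E G ρ n)

variable {E G : Set α} {ρ : ℕ → ℝ}

theorem iterThickening_subset (hGE : G ⊆ E) : ∀ n, iterThickening E G ρ n ⊆ E
  | 0 => hGE
  | n + 1 => union_subset (iterThickening_subset hGE n) inter_subset_left

theorem monotone_iterThickening : Monotone (iterThickening E G ρ) :=
  monotone_nat_of_le_succ fun _ => subset_union_left

theorem inter_ball_subset_iterThickening_succ {n : ℕ} {w : α}
    (hw : w ∈ iterThickening E G ρ n) :
    E ∩ ball w (ρ n) ⊆ iterThickening E G ρ (n + 1) :=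
  fun _ ⟨hyE, hyw⟩ => Or.inr ⟨hyE, mem_thickening_iff.2 ⟨w, hw, hyw⟩⟩

theorem exists_mem_iterThickening_dist_le_sub (hρ₀ : ∀ i, 0 ≤ ρ i)
    (hρ : ∀ i, 2 * ρ (i + 1) ≤ ρ i) (n : ℕ) {m : ℕ} {u : α}
    (hu : u ∈ iterThickening E G ρ (n + m)) :
    ∃ w ∈ iterThickening E G ρ n, dist u w ≤ 2 * ρ n - 2 * ρ (n + m) := by
  induction m generalizing u with
  | zero => exact ⟨u, hu, by simp⟩
  | succ m ih =>
    rw [← add_assoc] at hu ⊢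
    have hstep := hρ (n + m)
    rcases hu with hu | ⟨-, hu⟩
    · obtain ⟨w, hw, huw⟩ := ih hu
      exact ⟨w, hw, by linarith [hρ₀ (n + m + 1)]⟩
    · obtain ⟨v, hv, huv⟩ := mem_thickening_iff.1 hu
      obtain ⟨w, hw, hvw⟩ := ih hv
      exact ⟨w, hw, by linarith [dist_triangle u v w]⟩

theorem exists_mem_iterThickening_dist_le (hρ₀ : ∀ i, 0 ≤ ρ i)
    (hρ : ∀ i, 2 * ρ (i + 1) ≤ ρ i) {m : ℕ} {u : α} (hu : u ∈ iterThickening E G ρ m)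
    (n : ℕ) : ∃ w ∈ iterThickening E G ρ n, dist u w ≤ 2 * ρ n := by
  rcases le_total m n with hmn | hnm
  · exact ⟨u, monotone_iterThickening hmn hu, by simpa using hρ₀ n⟩
  · obtain ⟨m, rfl⟩ := Nat.exists_eq_add_of_le hnm
    obtain ⟨w, hw, huw⟩ := exists_mem_iterThickening_dist_le_sub hρ₀ hρ n hu
    exact ⟨w, hw, by linarith [hρ₀ (n + m)]⟩

theorem subset_iterThickeningClosure : G ⊆ iterThickeningClosure E G ρ :=
  (subset_iUnion (iterThickening E G ρ) 0).trans subset_closure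

theorem iterThickeningClosure_subset (hGE : G ⊆ E) (hE : IsClosed E) :
    iterThickeningClosure E G ρ ⊆ E :=
  closure_minimal (iUnion_subset (iterThickening_subset hGE)) hE

theorem iterThickeningClosure_subset_cthickening (hρ₀ : ∀ i, 0 ≤ ρ i)
    (hρ : ∀ i, 2 * ρ (i + 1) ≤ ρ i) :
    iterThickeningClosure E G ρ ⊆ cthickening (2 * ρ 0) G := by
  refine closure_minimal (iUnion_subset fun m u hu => ?_) isClosed_cthickening
  obtain ⟨w, hw, huw⟩ := exists_mem_iterThickening_dist_le hρ₀ hρ hu 0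
  exact mem_cthickening_of_dist_le u w _ G hw huw

theorem exists_inter_ball_subset_iterThickeningClosure (hρ₀ : ∀ i, 0 < ρ i)
    (hρ : ∀ i, 2 * ρ (i + 1) ≤ ρ i) {x : α} {r : ℝ} {n : ℕ}
    (hx : x ∈ iterThickeningClosure E G ρ) (hr : 4 * ρ n ≤ r) :
    ∃ w ∈ iterThickening E G ρ n,
      E ∩ ball w (ρ n) ⊆ iterThickeningClosure E G ρ ∩ ball x r := by
  obtain ⟨u, hu, hxu⟩ := Metric.mem_closure_iff.1 hx (ρ n) (hρ₀ n)
  obtain ⟨m, hum⟩ := mem_iUnion.1 hu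
  obtain ⟨w, hw, huw⟩ := exists_mem_iterThickening_dist_le (fun i => (hρ₀ i).le) hρ hum n
  refine ⟨w, hw, fun y hy => ⟨subset_closure <| mem_iUnion.2
    ⟨n + 1, inter_ball_subset_iterThickening_succ hw hy⟩, ?_⟩⟩
  rw [mem_ball]
  linarith [mem_ball.1 hy.2, dist_triangle4 y w u x, dist_comm w u, dist_comm u x]

end IterThickening

theorem exists_dyadic_scale {s r : ℝ} (hr : 0 < r) :
    ∃ n : ℕ, 4 * (s / 2 ^ n) ≤ r ∧ min r (8 * s) ≤ 8 * (s / 2 ^ n) := by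
  rcases le_or_gt (4 * s) r with hsr | hrs
  · exact ⟨0, by simpa using hsr, by simp⟩
  obtain ⟨m, hm, hm'⟩ := exists_nat_pow_near ((one_le_div₀ hr).2 hrs.le) one_lt_two
  rw [le_div_iff₀ hr] at hm
  rw [div_lt_iff₀ hr] at hm'
  refine ⟨m + 1, ?_, min_le_left _ _ |>.trans ?_⟩
  · rw [mul_div_assoc', div_le_iff₀ (by positivity)]
    linarith
  · rw [mul_div_assoc', le_div_iff₀ (by positivity), pow_succ]
    linarith

open Bornology

namespace ADR

variable {k C : ℝ} {E : Set X}

theorem mono {C' : ℝ} (hE : ADR k C E) (hC : C ≤ C') : ADR k C' E := by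
  obtain ⟨hcl, hnt, hC1, hbounds⟩ := hE
  have hC0 : 0 < C := one_pos.trans hC1
  refine ⟨hcl, hnt, hC1.trans_le hC, fun x hx r hr hrE => ?_⟩
  obtain ⟨hlow, hup⟩ := hbounds x hx r hr hrE
  have hrk : 0 ≤ r ^ k := Real.rpow_nonneg hr.le k
  exact ⟨le_trans (by gcongr) hlow, hup.trans (by gcongr)⟩

theorem of_subset {C' : ℝ} {F : Set X} (hE : ADR k C E) (hFE : F ⊆ E) (hF : IsClosed F)
    (hFnt : F.Nontrivial) (hC : C ≤ C')
    (hlower : ∀ x ∈ F, ∀ r : ℝ, 0 < r → ENNReal.ofReal r < ediam F →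
      ENNReal.ofReal (C'⁻¹ * r ^ k) ≤ μH[k] (F ∩ ball x r)) :
    ADR k C' F := by
  obtain ⟨-, -, hC1, hbounds⟩ := hE.mono hC
  refine ⟨hF, hFnt, hC1, fun x hx r hr hrF => ⟨hlower x hx r hr hrF, ?_⟩⟩
  calc μH[k] (F ∩ ball x r) ≤ μH[k] (E ∩ ball x r) := by gcongr
    _ ≤ ENNReal.ofReal (C' * r ^ k) :=
      (hbounds x (hFE hx) r hr (hrF.trans_le (ediam_mono hFE))).2

theorem iterThickeningClosure_dyadic {A s : ℝ} {G : Set X} (hE : ADR k C E) (hk : 0 ≤ k)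
    (hA : 1 ≤ A) (hGE : G ⊆ E) (hG : G.Nontrivial) (hGb : IsBounded G) (hs : 0 < s)
    (hGs : diam G ≤ 4 * A * s) :
    ADR k (C * (8 * A) ^ k) (iterThickeningClosure E G fun n => s / 2 ^ n) := by
  set ρ : ℕ → ℝ := fun n => s / 2 ^ n
  set F := iterThickeningClosure E G ρ
  have hρ₀ : ∀ i, 0 < ρ i := fun i => by positivity
  have hρ : ∀ i, 2 * ρ (i + 1) ≤ ρ i := fun i => le_of_eq (by ring)
  have hC0 : 0 < C := one_pos.trans hE.2.2.1
  have h8A : 1 ≤ 8 * A := by linarith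
  have hFthick : F ⊆ cthickening (2 * ρ 0) G :=
    iterThickeningClosure_subset_cthickening (fun i => (hρ₀ i).le) hρ
  have hFb : IsBounded F := hGb.cthickening.subset hFthick
  have hFdiam : diam F ≤ 8 * A * s := calc
    diam F ≤ diam G + 2 * (2 * ρ 0) :=
      (diam_mono hFthick hGb.cthickening).trans (diam_cthickening_le _ (by positivity))
    _ ≤ 8 * A * s := by simp only [ρ, pow_zero, div_one]; nlinarith
  refine hE.of_subset (iterThickeningClosure_subset hGE hE.1) isClosed_closure
    (hG.mono subset_iterThickeningClosure)
    (le_mul_of_one_le_right hC0.le (Real.one_le_rpow h8A hk)) fun x hx r hr hrF => ?_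
  have hr8 : r ≤ 8 * A * s :=
    ((ENNReal.ofReal_lt_iff_lt_toReal hr.le hFb.ediam_ne_top).1 hrF).le.trans hFdiam
  obtain ⟨n, hn4, hn8⟩ := exists_dyadic_scale (s := s) hr
  obtain ⟨w, hw, hwF⟩ := exists_inter_ball_subset_iterThickeningClosure hρ₀ hρ hx hn4
  have hrρ : r / (8 * A) ≤ ρ n := by
    have hrA : r / A ≤ min r (8 * s) :=
      le_min (div_le_self hr.le hA) ((div_le_iff₀ (by linarith)).2 (by linarith))
    have hsplit : r / (8 * A) = r / A / 8 := by ring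
    show r / (8 * A) ≤ s / 2 ^ n
    linarith
  have hρE : ENNReal.ofReal (ρ n) < ediam E := calc
    ENNReal.ofReal (ρ n) < ENNReal.ofReal r :=
      (ENNReal.ofReal_lt_ofReal_iff hr).2 (by linarith [hρ₀ n])
    _ < ediam F := hrF
    _ ≤ ediam E := ediam_mono (iterThickeningClosure_subset hGE hE.1)
  calc ENNReal.ofReal ((C * (8 * A) ^ k)⁻¹ * r ^ k)
      = ENNReal.ofReal (C⁻¹ * (r / (8 * A)) ^ k) := by
        rw [Real.div_rpow hr.le (by positivity), mul_inv, div_eq_mul_inv]; ring_nf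
    _ ≤ ENNReal.ofReal (C⁻¹ * ρ n ^ k) := by gcongr
    _ ≤ μH[k] (E ∩ ball w (ρ n)) :=
      (hE.2.2.2 w (iterThickening_subset hGE n hw) (ρ n) (hρ₀ n) hρE).1
    _ ≤ μH[k] (F ∩ ball x r) := measure_mono hwF

end ADR

/-- **Lemma 2, parts (i)–(ii).** If `E` is `k`-Ahlfors–David regular and `G ⊆ E` has
finite diameter `D`, then for any `A ≥ 1` there is `G' ⊆ E` with
`G ⊆ G' ⊆ {x ∈ E : dist(x,G) < 3D/A}` and `G'` `k`-Ahlfors–David regular with constant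
depending only on `k`, `C_E` and `A`. -/
theorem regular_extension (k C_E A : ℝ) (hk : 0 < k) (hA : 1 ≤ A) :
    ∃ C' : ℝ, 1 < C' ∧
      ∀ (X : Type*) [MetricSpace X] [MeasurableSpace X] [BorelSpace X]
        (E G : Set X),
        ADR k C_E E → G ⊆ E → G.Nontrivial → Bornology.IsBounded G →
        ∃ G' : Set X, G ⊆ G' ∧
          G' ⊆ {x ∈ E | Metric.infDist x G < 3 * Metric.diam G / A} ∧
          ADR k C' G' := by
  -- `1 < C_E` is only known once `E` is given, but `C'` is chosen before.
  refine ⟨max C_E 1 * (8 * A) ^ k,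
    one_lt_mul_of_le_of_lt (le_max_right _ _) (Real.one_lt_rpow (by linarith) hk), ?_⟩
  intro X _ _ _ E G hE hGE hGnt hGb
  have hA0 : 0 < A := by linarith
  have hD : 0 < diam G := diam_pos hGnt hGb
  set s := diam G / (4 * A)
  have hs : 0 < s := by positivity
  have hGs : diam G ≤ 4 * A * s := (mul_div_cancel₀ _ (by positivity)).ge
  refine ⟨iterThickeningClosure E G fun n => s / 2 ^ n, subset_iterThickeningClosure,
    fun x hx => ⟨iterThickeningClosure_subset hGE hE.1 hx, ?_⟩,
    (hE.iterThickeningClosure_dyadic hk.le hA hGE hGnt hGb hs hGs).mono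
      (by gcongr; exact le_max_left _ _)⟩
  have hxG := iterThickeningClosure_subset_cthickening (fun i => by positivity)
    (fun i => le_of_eq (by ring)) hx
  calc infDist x G ≤ 2 * (s / 2 ^ 0) :=
        ENNReal.toReal_le_of_le_ofReal (by positivity) (mem_cthickening_iff.1 hxG)
    _ = diam G / (2 * A) := by ring
    _ < 3 * diam G / A := by
        rw [div_lt_div_iff₀ (by positivity) hA0]; nlinarith
end

section
/- Let X be a metric space, k > 0, and let E ⊆ X be a k-Ahlfors–David regular set with constant C. Let G̃ ⊆ E and suppose there exists a constant c ∈ (0,1) such that for every x ∈ G̃ and every R with 0 < R < diam G̃ there exists y ∈ E with B(y, cR) ∩ E ⊆ B(x, R) ∩ G̃. Then G̃ is k-Ahlfors–David regular; specifically, for every x ∈ G̃ and 0 < R < diam G̃ one has c^k R^k / C ≤ 𝓗^k(B(x,R) ∩ G̃) ≤ C R^k. -/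
/-!
The upper bound is inherited from `E` by monotonicity. For the lower bound, the inner piece
`B(y, cR) ∩ E` of `B(x, R) ∩ G'` carries mass at least `C⁻¹ (cR)^k` by the regularity of `E`,
which applies because `cR < R < diam G' ≤ diam E`.
-/

open Metric MeasureTheory Set

variable {X : Type*} [MetricSpace X] [MeasurableSpace X] [BorelSpace X]

namespace ADR

variable {k C : ℝ} {E : Set X} {x : X} {r : ℝ}

theorem hausdorffMeasure_ball_inter_le_of_subset (hE : ADR k C E) {F : Set X} (hFE : F ⊆ E)
    (hx : x ∈ E) (hr : 0 < r) (hrE : ENNReal.ofReal r < ediam E) :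
    μH[k] (ball x r ∩ F) ≤ ENNReal.ofReal (C * r ^ k) :=
  calc μH[k] (ball x r ∩ F) ≤ μH[k] (E ∩ ball x r) :=
        measure_mono fun _ hz ↦ ⟨hFE hz.2, hz.1⟩
    _ ≤ ENNReal.ofReal (C * r ^ k) := (hE.2.2.2 x hx r hr hrE).2

theorem le_hausdorffMeasure_of_ball_inter_subset (hE : ADR k C E) (hx : x ∈ E) (hr : 0 < r)
    (hrE : ENNReal.ofReal r < ediam E) {S : Set X} (hS : ball x r ∩ E ⊆ S) :
    ENNReal.ofReal (C⁻¹ * r ^ k) ≤ μH[k] S :=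
  calc ENNReal.ofReal (C⁻¹ * r ^ k) ≤ μH[k] (E ∩ ball x r) := (hE.2.2.2 x hx r hr hrE).1
    _ ≤ μH[k] S := measure_mono <| inter_comm E _ ▸ hS

end ADR

theorem adr_of_inner_balls_general {X : Type*} [MetricSpace X] [MeasurableSpace X] [BorelSpace X]
    (k C c : ℝ) (E G' : Set X)
    (hE : ADR k C E) (hsub : G' ⊆ E) (hc : c ∈ Set.Ioo (0 : ℝ) 1)
    (hcover : ∀ x ∈ G', ∀ R : ℝ, 0 < R → ENNReal.ofReal R < EMetric.diam G' →
      ∃ y ∈ E, ball y (c * R) ∩ E ⊆ ball x R ∩ G') :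
    ∀ x ∈ G', ∀ R : ℝ, 0 < R → ENNReal.ofReal R < EMetric.diam G' →
      ENNReal.ofReal (c ^ k * R ^ k / C) ≤ μH[k] (ball x R ∩ G') ∧
        μH[k] (ball x R ∩ G') ≤ ENNReal.ofReal (C * R ^ k) := by
  intro x hx R hR hRG'
  have hRE : ENNReal.ofReal R < ediam E := hRG'.trans_le (ediam_mono hsub)
  refine ⟨?_, hE.hausdorffMeasure_ball_inter_le_of_subset hsub (hsub hx) hR hRE⟩
  obtain ⟨y, hy, hinner⟩ := hcover x hx R hR hRG'
  have hcR : 0 < c * R := mul_pos hc.1 hR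
  have hcRE : ENNReal.ofReal (c * R) < ediam E :=
    (ENNReal.ofReal_lt_ofReal_iff hR |>.2 (mul_lt_of_lt_one_left hR hc.2)).trans hRE
  have hconst : C⁻¹ * (c * R) ^ k = c ^ k * R ^ k / C := by
    rw [Real.mul_rpow hc.1.le hR.le]
    ring
  exact hconst ▸ hE.le_hausdorffMeasure_of_ball_inter_subset hy hcR hcRE hinner

/-- If `G' ⊆ E` with `E` `k`-Ahlfors–David regular with constant `C`, and every ball
`B(x,R)` centered on `G'` with `0 < R < diam G'` contains a set `B(y,cR) ∩ E` inside
`B(x,R) ∩ G'`, then `c^k R^k / C ≤ 𝓗^k(B(x,R) ∩ G') ≤ C R^k` for all such `x, R`. -/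
theorem adr_of_inner_balls {X : Type*} [MetricSpace X] [MeasurableSpace X] [BorelSpace X]
    (k C c : ℝ) (hk : 0 < k) (E G' : Set X)
    (hE : ADR k C E) (hsub : G' ⊆ E) (hc : c ∈ Set.Ioo (0 : ℝ) 1)
    (hcover : ∀ x ∈ G', ∀ R : ℝ, 0 < R → ENNReal.ofReal R < EMetric.diam G' →
      ∃ y ∈ E, ball y (c * R) ∩ E ⊆ ball x R ∩ G') :
    ∀ x ∈ G', ∀ R : ℝ, 0 < R → ENNReal.ofReal R < EMetric.diam G' →
      ENNReal.ofReal (c ^ k * R ^ k / C) ≤ μH[k] (ball x R ∩ G') ∧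
        μH[k] (ball x R ∩ G') ≤ ENNReal.ofReal (C * R ^ k) :=
  adr_of_inner_balls_general k C c E G' hE hsub hc hcover
end

section
/- Let X be a metric space, k > 0, C > 1, θ > 0, and let 𝓕 be a class of closed k-Ahlfors–David regular subsets of X. There exists A₀ ≥ 1, depending only on C, k, and θ, such that for every A ≥ A₀ the following holds. Let x₀ ∈ X and let (F̃_n)_{n≥0} be sets in X such that each F̃_n is k-Ahlfors–David regular with constant C and F̃_n ∈ BP(𝓕) with constant θ, F̃_n ⊆ B(x₀, 2A^n) for all n, diam F̃_n ≥ A^{n-1} for all n, and F̃_n ∩ B(x₀, A^{n-1}/4) = ∅ for all n ≥ 1. If the union F = ⋃_{n≥0} F̃_n is k-Ahlfors–David regular with constant C_F, then F ∈ BP(𝓕) with a constant depending only on C, C_F, θ, A, and k. -/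
/-!
Fix `x ∈ F = ⋃ n, F' n` and `r > 0`. By regularity of `F`, `𝓗^k (F ∩ B(x, r)) ≥ C_F⁻¹ r^k`.
A piece `F' m` lies in `B(x₀, 2Aᵐ)`, hence in a ball of radius `4Aᵐ` centred on `F`, so the
pieces with `Aᵐ ≤ δ r` carry mass at most a geometric series `≲ C_F (δ r)^k`, which is at most
half of the total for `δ` small. The pieces lie in the annuli `A^(m-1)/4 ≤ d(·, x₀) < 2Aᵐ`, so
only `N + 1` of the larger ones can meet `B(x, r)`, with `N` depending on `A` and `δ` only. One
of them carries a fixed fraction of the mass of the ball, and a big piece of that single `F' m`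
is a big piece of `F`.
-/

open Metric MeasureTheory Set

variable {X : Type*} [MetricSpace X] [MeasurableSpace X] [BorelSpace X]

open scoped ENNReal

theorem geom_sum_range_succ_le_two_mul_pow {q : ℝ} (hq : 2 ≤ q) :
    ∀ M : ℕ, ∑ i ∈ Finset.range (M + 1), q ^ i ≤ 2 * q ^ M
  | 0 => by simp
  | M + 1 => by
    rw [Finset.sum_range_succ, pow_succ]
    nlinarith [geom_sum_range_succ_le_two_mul_pow hq M, pow_nonneg (by linarith : (0:ℝ) ≤ q) M]

theorem Finset.sum_pow_le_two_mul_pow {q : ℝ} (hq : 2 ≤ q) {T : Finset ℕ} {M : ℕ}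
    (hT : ∀ i ∈ T, i ≤ M) : ∑ i ∈ T, q ^ i ≤ 2 * q ^ M := by
  refine le_trans (Finset.sum_le_sum_of_subset_of_nonneg (fun i hi => ?_) fun i _ _ => ?_)
    (geom_sum_range_succ_le_two_mul_pow hq M)
  · exact Finset.mem_range_succ_iff.2 (hT i hi)
  · positivity

theorem tsum_indicator_rpow_pow_le {A k : ℝ} (hA : 1 < A) (hk : 0 ≤ k) (hAk : 2 ≤ A ^ k)
    (s : ℝ) :
    ∑' m : ℕ, {m | A ^ m ≤ s}.indicator (fun m => ENNReal.ofReal ((A ^ m) ^ k)) m ≤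
      ENNReal.ofReal (2 * s ^ k) := by
  classical
  obtain ⟨n, hn⟩ := pow_unbounded_of_one_lt s hA
  have hlt (m : ℕ) (hm : A ^ m ≤ s) : m ∈ Finset.range n :=
    Finset.mem_range.2 ((pow_lt_pow_iff_right₀ hA).1 (hm.trans_lt hn))
  rw [tsum_eq_sum (s := Finset.range n) fun m hm =>
      indicator_of_notMem (s := {m | A ^ m ≤ s}) (fun h => hm (hlt m h)) _,
    Finset.sum_indicator_eq_sum_filter]
  set T := (Finset.range n).filter (· ∈ {m | A ^ m ≤ s})
  rcases T.eq_empty_or_nonempty with hT | hT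
  · simp [hT]
  have hM : A ^ T.max' hT ≤ s := (Finset.mem_filter.1 (T.max'_mem hT)).2
  have hA0 : 0 ≤ A := by linarith
  rw [← ENNReal.ofReal_sum_of_nonneg fun m _ => by positivity]
  refine ENNReal.ofReal_le_ofReal ?_
  calc ∑ m ∈ T, (A ^ m) ^ k = ∑ m ∈ T, (A ^ k) ^ m :=
        Finset.sum_congr rfl fun m _ => (Real.rpow_pow_comm hA0 k m).symm
    _ ≤ 2 * (A ^ k) ^ T.max' hT := Finset.sum_pow_le_two_mul_pow hAk fun m hm => T.le_max' m hm
    _ ≤ 2 * s ^ k := by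
      rw [Real.rpow_pow_comm hA0]
      gcongr

theorem ENNReal.exists_div_card_le_of_two_mul_le_tsum {ι : Type*} {f : ι → ℝ≥0∞} {S : Set ι}
    {J : Finset ι} {c : ℝ≥0∞} (hc₀ : c ≠ 0) (hc : c ≠ ⊤) (htotal : 2 * c ≤ ∑' i, f i)
    (hsmall : ∑' i, S.indicator f i ≤ c) (hJ : ∀ i ∉ J, i ∉ S → f i = 0) :
    ∃ i ∈ J, c / J.card ≤ f i := by
  have hrest : ∑' i, Sᶜ.indicator f i = ∑ i ∈ J, Sᶜ.indicator f i :=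
    tsum_eq_sum fun i hi => indicator_apply_eq_zero.2 (hJ i hi)
  have hlarge : c ≤ ∑ i ∈ J, f i := by
    refine (ENNReal.add_le_add_iff_left hc).1 ?_
    calc c + c = 2 * c := (two_mul c).symm
      _ ≤ ∑' i, S.indicator f i + ∑' i, Sᶜ.indicator f i := by
        rwa [← ENNReal.tsum_add, tsum_congr fun i => indicator_self_add_compl_apply S f i]
      _ ≤ c + ∑ i ∈ J, f i := by
        rw [hrest]
        gcongr
        exact indicator_le_self _ _ _
  have hJ₀ : J.Nonempty := by
    by_contra hJe
    rw [Finset.not_nonempty_iff_eq_empty.1 hJe, Finset.sum_empty] at hlarge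
    exact hc₀ (nonpos_iff_eq_zero.1 hlarge)
  refine ENNReal.exists_le_of_sum_le hJ₀ (le_of_eq_of_le ?_ hlarge)
  rw [Finset.sum_const, nsmul_eq_mul, ENNReal.mul_div_cancel (by simpa using hJ₀.ne_empty)
    (ENNReal.natCast_ne_top _)]

/-- Applied with `t = Aᵐ` and `D = dist x x₀` when `F' m` meets `B(x, r)`. -/
theorem exists_mem_Ioc_of_le_of_sub_lt {A D r δ ρ : ℝ} (hA : 0 < A) (hr : 0 < r)
    (hρ : 24 * A ≤ ρ) (hρδ : 12 * A ≤ ρ * δ) :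
    ∃ a, ∀ t, t ≤ 4 * A * (D + r) → D - r < 2 * t → δ * r < t → t ∈ Ioc a (ρ * a) := by
  by_cases hD : D ≤ 2 * r
  · refine ⟨δ * r, fun t ht _ hδt => ⟨hδt, ?_⟩⟩
    nlinarith
  · refine ⟨D / 4, fun t ht hDt _ => ⟨by linarith, ?_⟩⟩
    nlinarith

theorem exists_Ico_of_pow_mem_Ioc {A ρ : ℝ} {N : ℕ} (hA : 1 < A) (hρ : 0 < ρ) (hN : ρ ≤ A ^ N)
    (a : ℝ) : ∃ m₀ : ℕ, ∀ m : ℕ, A ^ m ∈ Ioc a (ρ * a) → m ∈ Finset.Ico m₀ (m₀ + N) := by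
  classical
  have hex : ∃ m, a < A ^ m := pow_unbounded_of_one_lt a hA
  refine ⟨Nat.find hex, fun m ⟨ham, hma⟩ => Finset.mem_Ico.2 ⟨Nat.find_min' hex ham, ?_⟩⟩
  have : A ^ m < A ^ (Nat.find hex + N) := calc
    A ^ m ≤ ρ * a := hma
    _ < ρ * A ^ Nat.find hex := mul_lt_mul_of_pos_left (Nat.find_spec hex) hρ
    _ ≤ A ^ N * A ^ Nat.find hex := by gcongr
    _ = A ^ (Nat.find hex + N) := by rw [pow_add, mul_comm]
  exact (pow_lt_pow_iff_right₀ hA).1 this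

theorem Metric.ediam_iUnion_eq_top_of_forall_le_diam {Y ι : Type*} [PseudoMetricSpace Y]
    {F : ι → Set Y} (h : ∀ r : ℝ, ∃ i, r ≤ diam (F i)) : ediam (⋃ i, F i) = ⊤ := by
  refine ENNReal.eq_top_of_forall_nnreal_le fun r => ?_
  obtain ⟨i, hi⟩ := h r
  calc (r : ℝ≥0∞) = ENNReal.ofReal r := (ENNReal.ofReal_coe_nnreal).symm
    _ ≤ ENNReal.ofReal (diam (F i)) := ENNReal.ofReal_le_ofReal hi
    _ ≤ ediam (F i) := ENNReal.ofReal_toReal_le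
    _ ≤ ediam (⋃ i, F i) := ediam_mono (subset_iUnion F i)

namespace ADR

variable {k C : ℝ} {E : Set X}

theorem one_lt (hE : ADR k C E) : 1 < C := hE.2.2.1

theorem le_measure_inter_ball (hE : ADR k C E) (hEd : ediam E = ⊤) {x : X} (hx : x ∈ E)
    {r : ℝ} (hr : 0 < r) : ENNReal.ofReal (C⁻¹ * r ^ k) ≤ μH[k] (E ∩ ball x r) :=
  (hE.2.2.2 x hx r hr (ENNReal.ofReal_lt_top.trans_eq hEd.symm)).1

theorem measure_inter_ball_le (hE : ADR k C E) (hEd : ediam E = ⊤) {x : X} (hx : x ∈ E)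
    {r : ℝ} (hr : 0 < r) : μH[k] (E ∩ ball x r) ≤ ENNReal.ofReal (C * r ^ k) :=
  (hE.2.2.2 x hx r hr (ENNReal.ofReal_lt_top.trans_eq hEd.symm)).2

theorem measure_le_of_subset_ball (hE : ADR k C E) (hEd : ediam E = ⊤) {s : Set X}
    (hsE : s ⊆ E) {x₀ : X} {r : ℝ} (hs : s ⊆ ball x₀ r) :
    μH[k] s ≤ ENNReal.ofReal (C * (2 * r) ^ k) := by
  rcases s.eq_empty_or_nonempty with rfl | ⟨w, hw⟩
  · simp
  have hr : 0 < r := pos_of_mem_ball (hs hw)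
  refine (measure_mono (show s ⊆ E ∩ ball w (2 * r) from fun v hv => ⟨hsE hv, ?_⟩)).trans
    (hE.measure_inter_ball_le hEd (hsE hw) (by positivity))
  calc dist v w ≤ dist v x₀ + dist w x₀ := dist_triangle_right v w x₀
    _ < r + r := add_lt_add (hs hv) (hs hw)
    _ = 2 * r := by ring

end ADR

theorem exists_finset_forall_le_of_inter_ball_nonempty {Y : Type*} [PseudoMetricSpace Y]
    {A : ℝ} {x₀ : Y} {F' : ℕ → Set Y} (hA : 1 < A)
    (hsub : ∀ n, F' n ⊆ ball x₀ (2 * A ^ n))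
    (hsep : ∀ n : ℕ, 1 ≤ n → F' n ∩ ball x₀ (A ^ ((n : ℤ) - 1) / 4) = ∅)
    {δ ρ : ℝ} {N : ℕ} (hρ : 24 * A ≤ ρ) (hρδ : 12 * A ≤ ρ * δ) (hN : ρ ≤ A ^ N)
    (x : Y) {r : ℝ} (hr : 0 < r) :
    ∃ J : Finset ℕ, J.card ≤ N + 1 ∧
      ∀ m ∉ J, (F' m ∩ ball x r).Nonempty → A ^ m ≤ δ * r := by
  have hA₀ : 0 < A := by linarith
  obtain ⟨a, ha⟩ := exists_mem_Ioc_of_le_of_sub_lt (D := dist x x₀) hA₀ hr hρ hρδ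
  obtain ⟨m₀, hm₀⟩ := exists_Ico_of_pow_mem_Ioc hA (by linarith) hN a
  refine ⟨insert 0 (Finset.Ico m₀ (m₀ + N)), Finset.card_insert_le _ _ |>.trans (by simp),
    fun m hmJ ⟨w, hwF, hwx⟩ => not_lt.1 fun hlarge => hmJ (Finset.mem_insert_of_mem ?_)⟩
  have hm : 1 ≤ m := Nat.one_le_iff_ne_zero.2 fun h => hmJ (h ▸ Finset.mem_insert_self _ _)
  have hwx : dist w x < r := hwx
  have hfar : A ^ ((m : ℤ) - 1) / 4 ≤ dist w x₀ :=
    not_lt.1 fun h => (hsep m hm).subset ⟨hwF, h⟩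
  rw [zpow_sub_one₀ hA₀.ne', zpow_natCast] at hfar
  have hnear : dist w x₀ < 2 * A ^ m := hsub m hwF
  refine hm₀ m (ha _ ?_ ?_ hlarge)
  · have := dist_triangle w x x₀
    have hA4 : A ^ m ≤ 4 * A * dist w x₀ := by
      rw [← div_eq_mul_inv, div_div, div_le_iff₀ (by positivity)] at hfar
      linarith
    nlinarith
  · have := dist_triangle x w x₀
    rw [dist_comm x w] at this
    linarith

section Pieces

variable {k A C : ℝ} {x₀ : X} {F' : ℕ → Set X}

theorem tsum_indicator_measure_le (hA : 1 < A) (hk : 0 ≤ k) (hAk : 2 ≤ A ^ k)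
    (hsub : ∀ n, F' n ⊆ ball x₀ (2 * A ^ n)) (hF : ADR k C (⋃ n, F' n))
    (hFd : ediam (⋃ n, F' n) = ⊤) (s : ℝ) :
    ∑' m, {m | A ^ m ≤ s}.indicator (fun m => μH[k] (F' m)) m ≤
      ENNReal.ofReal (2 * C * 4 ^ k * s ^ k) := by
  have hC : 0 ≤ C * 4 ^ k := by have := hF.one_lt; positivity
  have hpiece (m : ℕ) :
      μH[k] (F' m) ≤ ENNReal.ofReal (C * 4 ^ k) * ENNReal.ofReal ((A ^ m) ^ k) := by
    rw [← ENNReal.ofReal_mul hC, mul_assoc, ← Real.mul_rpow (by norm_num) (by positivity)]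
    convert hF.measure_le_of_subset_ball hFd (subset_iUnion F' m) (hsub m) using 4
    ring
  calc ∑' m, {m | A ^ m ≤ s}.indicator (fun m => μH[k] (F' m)) m
      ≤ ∑' m, ENNReal.ofReal (C * 4 ^ k) *
          {m | A ^ m ≤ s}.indicator (fun m => ENNReal.ofReal ((A ^ m) ^ k)) m :=
        ENNReal.tsum_le_tsum fun m => by
          rw [← indicator_const_mul]
          exact indicator_le_indicator (hpiece m)
    _ = ENNReal.ofReal (C * 4 ^ k) *
          ∑' m, {m | A ^ m ≤ s}.indicator (fun m => ENNReal.ofReal ((A ^ m) ^ k)) m :=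
        ENNReal.tsum_mul_left
    _ ≤ ENNReal.ofReal (C * 4 ^ k) * ENNReal.ofReal (2 * s ^ k) := by
        gcongr
        exact tsum_indicator_rpow_pow_le hA hk hAk s
    _ = ENNReal.ofReal (2 * C * 4 ^ k * s ^ k) := by
        rw [← ENNReal.ofReal_mul hC]
        ring_nf

theorem tsum_indicator_measure_inter_ball_le (hk : 0 < k) (hA : 1 < A) (hAk : 2 ≤ A ^ k)
    (hsub : ∀ n, F' n ⊆ ball x₀ (2 * A ^ n)) (hF : ADR k C (⋃ n, F' n))
    (hFd : ediam (⋃ n, F' n) = ⊤) {δ : ℝ} (hδ : 0 < δ) (hδC : 4 * C ^ 2 * 4 ^ k * δ ^ k ≤ 1)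
    (x : X) {r : ℝ} (hr : 0 < r) :
    ∑' m, {m | A ^ m ≤ δ * r}.indicator (fun m => μH[k] (F' m ∩ ball x r)) m ≤
      ENNReal.ofReal (C⁻¹ * r ^ k / 2) := by
  have hC : 0 < C := by have := hF.one_lt; positivity
  calc _ ≤ ∑' m, {m | A ^ m ≤ δ * r}.indicator (fun m => μH[k] (F' m)) m :=
        ENNReal.tsum_le_tsum fun m => indicator_le_indicator (measure_mono inter_subset_left)
    _ ≤ ENNReal.ofReal (2 * C * 4 ^ k * (δ * r) ^ k) :=
        tsum_indicator_measure_le hA hk.le hAk hsub hF hFd _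
    _ ≤ ENNReal.ofReal (C⁻¹ * r ^ k / 2) := by
        refine ENNReal.ofReal_le_ofReal ?_
        rw [Real.mul_rpow hδ.le hr.le]
        calc 2 * C * 4 ^ k * (δ ^ k * r ^ k)
            = (4 * C ^ 2 * 4 ^ k * δ ^ k) * (C⁻¹ * r ^ k / 2) := by field_simp; ring
          _ ≤ C⁻¹ * r ^ k / 2 := mul_le_of_le_one_left (by positivity) hδC

theorem exists_heavy_piece (hk : 0 < k) (hA : 1 < A) (hAk : 2 ≤ A ^ k)
    (hsub : ∀ n, F' n ⊆ ball x₀ (2 * A ^ n))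
    (hsep : ∀ n : ℕ, 1 ≤ n → F' n ∩ ball x₀ (A ^ ((n : ℤ) - 1) / 4) = ∅)
    (hF : ADR k C (⋃ n, F' n)) (hFd : ediam (⋃ n, F' n) = ⊤)
    {δ ρ : ℝ} {N : ℕ} (hδ : 0 < δ) (hδC : 4 * C ^ 2 * 4 ^ k * δ ^ k ≤ 1)
    (hρ : 24 * A ≤ ρ) (hρδ : 12 * A ≤ ρ * δ) (hN : ρ ≤ A ^ N)
    {x : X} (hx : x ∈ ⋃ n, F' n) {r : ℝ} (hr : 0 < r) :
    ∃ m, ∃ y ∈ F' m, dist y x < r ∧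
      ENNReal.ofReal (C⁻¹ / (2 * (N + 1)) * r ^ k) ≤ μH[k] (F' m ∩ ball x r) := by
  have hC : 0 < C := by have := hF.one_lt; positivity
  set c := ENNReal.ofReal (C⁻¹ * r ^ k / 2)
  have hc₀ : c ≠ 0 := (ENNReal.ofReal_pos.2 (by positivity)).ne'
  have htotal : 2 * c ≤ ∑' m, μH[k] (F' m ∩ ball x r) := calc
    2 * c = ENNReal.ofReal (C⁻¹ * r ^ k) := by
      rw [← ENNReal.ofReal_ofNat 2, ← ENNReal.ofReal_mul zero_le_two]
      ring_nf
    _ ≤ μH[k] ((⋃ n, F' n) ∩ ball x r) := hF.le_measure_inter_ball hFd hx hr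
    _ ≤ ∑' m, μH[k] (F' m ∩ ball x r) := by
      rw [iUnion_inter]
      exact measure_iUnion_le _
  have hsmall := tsum_indicator_measure_inter_ball_le hk hA hAk hsub hF hFd hδ hδC x hr
  obtain ⟨J, hJ, hJsmall⟩ :=
    exists_finset_forall_le_of_inter_ball_nonempty hA hsub hsep hρ hρδ hN x hr
  obtain ⟨m, -, hm⟩ := ENNReal.exists_div_card_le_of_two_mul_le_tsum hc₀ ENNReal.ofReal_ne_top
    htotal hsmall fun m hmJ hms =>
      by_contra fun h => hms (hJsmall m hmJ (nonempty_of_measure_ne_zero h))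
  have hheavy : ENNReal.ofReal (C⁻¹ / (2 * (N + 1)) * r ^ k) ≤ μH[k] (F' m ∩ ball x r) := calc
    _ = c / (N + 1 : ℕ) := by
      rw [← ENNReal.ofReal_natCast, ← ENNReal.ofReal_div_of_pos (by positivity)]
      congr 1
      push_cast
      field_simp
    _ ≤ c / J.card := ENNReal.div_le_div_left (Nat.cast_le.2 hJ) c
    _ ≤ _ := hm
  obtain ⟨y, hyF, hyx⟩ := nonempty_of_measure_ne_zero
    ((ENNReal.ofReal_pos.2 (by positivity)).trans_le hheavy).ne'
  exact ⟨m, y, hyF, hyx, hheavy⟩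

theorem bigPieces_iUnion_of_heavy_piece {θ c : ℝ} {𝓕 : Set (Set X)} (hθ : 0 ≤ θ) (hC : 0 < C)
    (hBP : ∀ n, BigPieces k θ 𝓕 (F' n))
    (hup : ∀ x ∈ ⋃ n, F' n, ∀ R, 0 < R →
      μH[k] ((⋃ n, F' n) ∩ ball x R) ≤ ENNReal.ofReal (C * R ^ k))
    (hheavy : ∀ x ∈ ⋃ n, F' n, ∀ r, 0 < r → ∃ m, ∃ y ∈ F' m, dist y x < r ∧
      ENNReal.ofReal (c * r ^ k) ≤ μH[k] (F' m ∩ ball x r)) :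
    BigPieces k (θ * c / (C * 4 ^ k)) 𝓕 (⋃ n, F' n) := by
  intro x hx R hR
  obtain ⟨m, y, hyF, hyx, hm⟩ := hheavy x hx (R / 4) (by positivity)
  obtain ⟨G, hG, hGm⟩ := hBP m y hyF (R / 2) (by positivity)
  refine ⟨G, hG, ?_⟩
  have hball : ball y (R / 2) ⊆ ball x R := ball_subset_ball' (by linarith [hyx.le])
  have hpiece : F' m ∩ ball x (R / 4) ⊆ ball y (R / 2) ∩ F' m := fun z ⟨hzF, hzx⟩ =>
    ⟨ball_subset_ball' (by linarith [dist_comm x y, hyx.le]) hzx, hzF⟩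
  have hconst : θ * c / (C * 4 ^ k) * (C * R ^ k) = θ * (c * (R / 4) ^ k) := by
    rw [Real.div_rpow hR.le (by norm_num)]
    field_simp
  calc ENNReal.ofReal (θ * c / (C * 4 ^ k)) * μH[k] (ball x R ∩ ⋃ n, F' n)
      ≤ ENNReal.ofReal (θ * c / (C * 4 ^ k)) * ENNReal.ofReal (C * R ^ k) := by
        rw [inter_comm]
        gcongr
        exact hup x hx R hR
    _ = ENNReal.ofReal θ * ENNReal.ofReal (c * (R / 4) ^ k) := by
        rw [← ENNReal.ofReal_mul' (by positivity), hconst, ENNReal.ofReal_mul hθ]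
    _ ≤ ENNReal.ofReal θ * μH[k] (ball y (R / 2) ∩ F' m) := by
        gcongr
        exact hm.trans (measure_mono hpiece)
    _ ≤ μH[k] (ball y (R / 2) ∩ F' m ∩ G) := hGm
    _ ≤ μH[k] (ball x R ∩ (⋃ n, F' n) ∩ G) :=
        measure_mono (inter_subset_inter_left _ (inter_subset_inter hball (subset_iUnion F' m)))

end Pieces

theorem bp_union_general (k C θ : ℝ) (hk : 0 < k) (hθ : 0 < θ) :
    ∃ A₀ : ℝ, 1 ≤ A₀ ∧
      ∀ A : ℝ, A₀ ≤ A → ∀ C_F : ℝ,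
        ∃ θ' : ℝ, 0 < θ' ∧
          ∀ (X : Type*) [MetricSpace X] [MeasurableSpace X] [BorelSpace X]
            (𝓕 : Set (Set X)) (x₀ : X) (F' : ℕ → Set X),
            (∀ H ∈ 𝓕, ∃ C'' : ℝ, ADR k C'' H) →
            (∀ n : ℕ, ADR k C (F' n)) →
            (∀ n : ℕ, BigPieces k θ 𝓕 (F' n)) →
            (∀ n : ℕ, F' n ⊆ ball x₀ (2 * A ^ n)) →
            (∀ n : ℕ, A ^ ((n : ℤ) - 1) ≤ Metric.diam (F' n)) →
            (∀ n : ℕ, 1 ≤ n → F' n ∩ ball x₀ (A ^ ((n : ℤ) - 1) / 4) = ∅) →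
            ADR k C_F (⋃ n, F' n) →
            BigPieces k θ' 𝓕 (⋃ n, F' n) := by
  refine ⟨max 2 (2 ^ k⁻¹), le_max_of_le_left one_le_two, fun A hA C_F => ?_⟩
  have hA₁ : 1 < A := one_lt_two.trans_le (le_of_max_le_left hA)
  have hAk : 2 ≤ A ^ k := calc
    2 = (2 ^ k⁻¹) ^ k := (Real.rpow_inv_rpow zero_le_two hk.ne').symm
    _ ≤ A ^ k := Real.rpow_le_rpow (by positivity) (le_of_max_le_right hA) hk.le
  rcases le_or_gt C_F 1 with hCF | hCF
  · exact ⟨1, one_pos, fun X _ _ _ 𝓕 x₀ F' _ _ _ _ _ _ hF => absurd hF.one_lt hCF.not_gt⟩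
  set δ := (4 * C_F ^ 2 * 4 ^ k)⁻¹ ^ k⁻¹
  have hδ : 0 < δ := by positivity
  have hδC : 4 * C_F ^ 2 * 4 ^ k * δ ^ k ≤ 1 := by
    rw [Real.rpow_inv_rpow (by positivity) hk.ne', mul_inv_cancel₀ (by positivity)]
  obtain ⟨N, hN⟩ := pow_unbounded_of_one_lt (24 * A + 12 * A / δ) hA₁
  refine ⟨θ * (C_F⁻¹ / (2 * (N + 1))) / (C_F * 4 ^ k), by positivity, ?_⟩
  intro X _ _ _ 𝓕 x₀ F' _ _ hBP hsub hdiam hsep hF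
  have hFd : ediam (⋃ n, F' n) = ⊤ := by
    refine ediam_iUnion_eq_top_of_forall_le_diam fun r => ?_
    obtain ⟨n, hn⟩ := pow_unbounded_of_one_lt r hA₁
    refine ⟨n + 1, hn.le.trans (le_of_eq_of_le ?_ (hdiam (n + 1)))⟩
    simp
  refine bigPieces_iUnion_of_heavy_piece hθ.le (by positivity) hBP
    (fun x hx R hR => hF.measure_inter_ball_le hFd hx hR) fun x hx r hr =>
      exists_heavy_piece hk hA₁ hAk hsub hsep hF hFd hδ hδC ?_ ?_ hN.le hx hr
  · have : 0 ≤ 12 * A / δ := by positivity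
    linarith
  · rw [add_mul, div_mul_cancel₀ _ hδ.ne']
    nlinarith

/-- **Big pieces for the union in the infinite-diameter case.** There is `A₀ ≥ 1`
depending only on `C`, `k`, `θ` so that for all `A ≥ A₀` and any regularity constant
`C_F` there is `θ' > 0` (depending only on `C`, `C_F`, `θ`, `A`, `k`) with: if each
`F' n` is `k`-Ahlfors–David regular with constant `C`, lies in `BP(𝓕)` with constant
`θ`, `F' n ⊆ B(x₀, 2Aⁿ)`, `diam (F' n) ≥ A^(n-1)`, `F' n ∩ B(x₀, A^(n-1)/4) = ∅` for
`n ≥ 1`, and `F = ⋃ₙ F' n` is `k`-Ahlfors–David regular with constant `C_F`, then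
`F ∈ BP(𝓕)` with constant `θ'`. -/
theorem bp_union (k C θ : ℝ) (hk : 0 < k) (hC : 1 < C) (hθ : 0 < θ) :
    ∃ A₀ : ℝ, 1 ≤ A₀ ∧
      ∀ A : ℝ, A₀ ≤ A → ∀ C_F : ℝ,
        ∃ θ' : ℝ, 0 < θ' ∧
          ∀ (X : Type*) [MetricSpace X] [MeasurableSpace X] [BorelSpace X]
            (𝓕 : Set (Set X)) (x₀ : X) (F' : ℕ → Set X),
            (∀ H ∈ 𝓕, ∃ C'' : ℝ, ADR k C'' H) →
            (∀ n : ℕ, ADR k C (F' n)) →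
            (∀ n : ℕ, BigPieces k θ 𝓕 (F' n)) →
            (∀ n : ℕ, F' n ⊆ ball x₀ (2 * A ^ n)) →
            (∀ n : ℕ, A ^ ((n : ℤ) - 1) ≤ Metric.diam (F' n)) →
            (∀ n : ℕ, 1 ≤ n → F' n ∩ ball x₀ (A ^ ((n : ℤ) - 1) / 4) = ∅) →
            ADR k C_F (⋃ n, F' n) →
            BigPieces k θ' 𝓕 (⋃ n, F' n) :=
  bp_union_general k C θ hk hθ
end
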